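/- Let L ⊆ (Z/d)^{2n} be Lagrangian, g ∈ L* a linear functional, and a ∈ (Z/d)^{2n} with g(b) = [a,b] for all b ∈ L. Then the stabilizer state satisfies Π_L^g = d^{-n} Σ_{b ∈ L + a} A(b), i.e., its expansion in the phase space point operator basis is the normalized indicator function of the affine subspace L + a. -/

import Mathlib

open Matrix

/-- The phase space `(ℤ/d)^{2n}` as pairs `(a_X, a_Z)`. -/
abbrev PS (d n : ℕ) := (Fin n → ZMod d) × (Fin n → ZMod d)

/-- `ω = exp(2πi/d)`. -/
noncomputable def omegaC (d : ℕ) : ℂ := Complex.exp (2 * Real.pi * Complex.I / d)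

/-- `ω^k` for an exponent `k : ℤ/d`. -/
noncomputable def chi (d : ℕ) (k : ZMod d) : ℂ := omegaC d ^ k.val

/-- Dot product over `ℤ/d`. -/
def dotZ {d n : ℕ} (x y : Fin n → ZMod d) : ZMod d := ∑ i, x i * y i

/-- The standard symplectic form `[a,b] = a_X·b_Z − b_X·a_Z`. -/
def symp {d n : ℕ} (a b : PS d n) : ZMod d := dotZ a.1 b.2 - dotZ b.1 a.2

/-- The Weyl-Heisenberg operator `T(a) = τ^{-a_X·a_Z} ⨂ᵢ Z^{(a_Z)_i} X^{(a_X)_i}`,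
where `τ = ω^{(d+1)/2} = ω^{2⁻¹ mod d}` for odd `d`. -/
noncomputable def WH (d n : ℕ) (a : PS d n) :
    Matrix (Fin n → ZMod d) (Fin n → ZMod d) ℂ :=
  Matrix.of fun q q' =>
    if q = q' + a.1 then chi d ((2⁻¹ : ZMod d) * (-(dotZ a.1 a.2)) + dotZ a.2 q) else 0

/-- An isotropic subspace of dimension `n`, i.e. a Lagrangian subspace. -/
def IsLagrangian (d n : ℕ) (L : Submodule (ZMod d) (PS d n)) : Prop :=
  (∀ a ∈ L, ∀ b ∈ L, symp a b = 0) ∧ Module.finrank (ZMod d) L = n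

/-- The stabilizer projection `Π_L^g = d^{-n} Σ_{b∈L} ω^{g(b)} T(b)`. -/
noncomputable def stabProj (d n : ℕ) [Fact d.Prime]
    (L : Submodule (ZMod d) (PS d n)) (g : L →ₗ[ZMod d] ZMod d) :
    Matrix (Fin n → ZMod d) (Fin n → ZMod d) ℂ :=
  letI : Fintype L := Fintype.ofFinite L
  ((d : ℂ) ^ n)⁻¹ • ∑ b : L, chi d (g b) • WH d n (b : PS d n)

/-- The phase space point operator `A(a) = d^{-n} Σ_b ω^{[a,b]} T(b)`. -/
noncomputable def psPoint (d n : ℕ) [Fact d.Prime] (a : PS d n) :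
    Matrix (Fin n → ZMod d) (Fin n → ZMod d) ℂ :=
  ((d : ℂ) ^ n)⁻¹ • ∑ b : PS d n, chi d (symp a b) • WH d n b

/-! Expanding each `A(b + a)` in the Weyl–Heisenberg basis, the coefficient of `T(c)` in
`Σ_{b ∈ L} A(b + a)` is `ω^{[a,c]} Σ_{b ∈ L} ω^{[b,c]}`. Because `L` is Lagrangian,
`L^⊥ = L`, so the character `b ↦ ω^{[b,c]}` of `L` is trivial exactly when `c ∈ L`: the
character sum is `d^n` for `c ∈ L` and `0` otherwise. What remains is
`d^n Σ_{c ∈ L} ω^{[a,c]} T(c)`, and `[a,c] = g(c)` on `L`. -/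

lemma omegaC_isPrimitiveRoot (d : ℕ) [NeZero d] : IsPrimitiveRoot (omegaC d) d :=
  Complex.isPrimitiveRoot_exp d (NeZero.ne d)

noncomputable def chiChar (d : ℕ) [NeZero d] : AddChar (ZMod d) ℂ :=
  AddChar.zmodChar d (omegaC_isPrimitiveRoot d).pow_eq_one

lemma chi_add (d : ℕ) [NeZero d] (x y : ZMod d) : chi d (x + y) = chi d x * chi d y :=
  (chiChar d).map_add_eq_mul x y

lemma chi_eq_one_iff (d : ℕ) [NeZero d] {k : ZMod d} : chi d k = 1 ↔ k = 0 := by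
  rw [chi, (omegaC_isPrimitiveRoot d).pow_eq_one_iff_dvd, ← ZMod.natCast_eq_zero_iff,
    ZMod.natCast_zmod_val]

lemma sum_chi_comp_eq_zero (d : ℕ) [NeZero d] {M : Type*} [AddCommGroup M] [Fintype M]
    {φ : M →+ ZMod d} (hφ : φ ≠ 0) : ∑ b, chi d (φ b) = 0 := by
  have hψ : (chiChar d).compAddMonoidHom φ ≠ 0 := by
    obtain ⟨b, hb⟩ := DFunLike.ne_iff.mp hφ
    exact AddChar.ne_zero_iff.mpr ⟨b, (chi_eq_one_iff d).not.mpr hb⟩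
  exact AddChar.sum_eq_zero_iff_ne_zero.mpr hψ

lemma dotZ_eq_dotProduct {d n : ℕ} (x y : Fin n → ZMod d) : dotZ x y = x ⬝ᵥ y := rfl

def sympForm (d n : ℕ) : LinearMap.BilinForm (ZMod d) (PS d n) :=
  LinearMap.mk₂ (ZMod d) symp
    (fun x y z => by
      simp only [symp, dotZ_eq_dotProduct, Prod.fst_add, Prod.snd_add, add_dotProduct,
        dotProduct_add]
      ring)
    (fun c x z => by
      simp only [symp, dotZ_eq_dotProduct, Prod.smul_fst, Prod.smul_snd, smul_dotProduct,
        dotProduct_smul, smul_eq_mul]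
      ring)
    (fun x y z => by
      simp only [symp, dotZ_eq_dotProduct, Prod.fst_add, Prod.snd_add, add_dotProduct,
        dotProduct_add]
      ring)
    (fun c x z => by
      simp only [symp, dotZ_eq_dotProduct, Prod.smul_fst, Prod.smul_snd, smul_dotProduct,
        dotProduct_smul, smul_eq_mul]
      ring)

lemma sympForm_apply {d n : ℕ} (x y : PS d n) : sympForm d n x y = symp x y := rfl

lemma symp_add_left {d n : ℕ} (x y z : PS d n) : symp (x + y) z = symp x z + symp y z :=
  (sympForm d n).map_add₂ x y z

lemma sympForm_nondegenerate (d n : ℕ) [Fact d.Prime] : (sympForm d n).Nondegenerate := by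
  refine .ofSeparatingLeft fun a h => Prod.ext (funext fun i => ?_) (funext fun i => ?_)
  · simpa [sympForm_apply, symp, dotZ_eq_dotProduct, dotProduct_single]
      using h (0, Pi.single i 1)
  · simpa [sympForm_apply, symp, dotZ_eq_dotProduct, single_dotProduct]
      using h (Pi.single i 1, 0)

lemma finrank_PS (d n : ℕ) [Fact d.Prime] : Module.finrank (ZMod d) (PS d n) = 2 * n := by
  simp [Module.finrank_prod, two_mul]

theorem LinearMap.BilinForm.orthogonal_eq_self_of_isotropic {K V : Type*} [Field K]
    [AddCommGroup V] [Module K V] [FiniteDimensional K V] {B : LinearMap.BilinForm K V}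
    (hB : B.Nondegenerate) {W : Submodule K V} (hW : ∀ x ∈ W, ∀ y ∈ W, B x y = 0)
    (hdim : 2 * Module.finrank K W = Module.finrank K V) : B.orthogonal W = W := by
  refine (Submodule.eq_of_le_of_finrank_le (fun x hx => (B.mem_orthogonal_iff).mpr
    fun y hy => hW y hy x hx) ?_).symm
  rw [B.finrank_orthogonal hB]
  omega

namespace IsLagrangian

variable {d n : ℕ} [Fact d.Prime] {L : Submodule (ZMod d) (PS d n)}

lemma orthogonal_eq (hL : IsLagrangian d n L) : (sympForm d n).orthogonal L = L :=
  (sympForm d n).orthogonal_eq_self_of_isotropic (sympForm_nondegenerate d n) hL.1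
    (by rw [hL.2, finrank_PS])

lemma card_eq [Fintype L] (hL : IsLagrangian d n L) : Fintype.card L = d ^ n := by
  rw [Module.card_eq_pow_finrank (K := ZMod d), ZMod.card, hL.2]

lemma sum_chi_symp_of_mem [Fintype L] (hL : IsLagrangian d n L) {c : PS d n} (hc : c ∈ L) :
    ∑ b : L, chi d (symp (b : PS d n) c) = (d : ℂ) ^ n := by
  simp [hL.1 _ _ c hc, chi, hL.card_eq]

lemma sum_chi_symp_of_notMem [Fintype L] (hL : IsLagrangian d n L) {c : PS d n} (hc : c ∉ L) :
    ∑ b : L, chi d (symp (b : PS d n) c) = 0 := by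
  refine sum_chi_comp_eq_zero d (φ := (((sympForm d n).flip c).comp L.subtype).toAddMonoidHom) ?_
  rw [← hL.orthogonal_eq, LinearMap.BilinForm.mem_orthogonal_iff] at hc
  simp only [not_forall] at hc
  obtain ⟨b, hb, hbc⟩ := hc
  exact DFunLike.ne_iff.mpr ⟨⟨b, hb⟩, hbc⟩

lemma sum_psPoint_add [Fintype L] (hL : IsLagrangian d n L) (a : PS d n) :
    ∑ b : L, psPoint d n ((b : PS d n) + a) =
      ∑ c : L, chi d (symp a (c : PS d n)) • WH d n (c : PS d n) := by
  classical
  have hdn : (d : ℂ) ^ n ≠ 0 :=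
    pow_ne_zero _ (Nat.cast_ne_zero.mpr (Fact.out : d.Prime).ne_zero)
  calc ∑ b : L, psPoint d n ((b : PS d n) + a)
      = ((d : ℂ) ^ n)⁻¹ • ∑ c : PS d n,
          ((∑ b : L, chi d (symp (b : PS d n) c)) * chi d (symp a c)) • WH d n c := by
        simp only [psPoint, ← Finset.smul_sum, symp_add_left, chi_add, Finset.sum_mul,
          Finset.sum_smul]
        rw [Finset.sum_comm]
    _ = ((d : ℂ) ^ n)⁻¹ • ∑ c : L, ((d : ℂ) ^ n * chi d (symp a c)) • WH d n c := by
        rw [← Fintype.sum_subtype_add_sum_subtype (· ∈ L)]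
        simp only [fun c : {c // c ∉ L} => hL.sum_chi_symp_of_notMem c.2,
          fun c : L => hL.sum_chi_symp_of_mem c.2, zero_mul, zero_smul, Finset.sum_const_zero,
          add_zero]
        -- the two sides differ only in their `Fintype L` instance
        convert rfl
    _ = ∑ c : L, chi d (symp a (c : PS d n)) • WH d n (c : PS d n) := by
        simp only [mul_smul]
        rw [← Finset.smul_sum, smul_smul, inv_mul_cancel₀ hdn, one_smul]

end IsLagrangian

theorem stabProj_eq_sum_psPoint_general (d n : ℕ) [Fact d.Prime]
    (L : Submodule (ZMod d) (PS d n)) (hL : IsLagrangian d n L)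
    (g : L →ₗ[ZMod d] ZMod d) (a : PS d n)
    (ha : ∀ b : L, g b = symp a (b : PS d n)) :
    stabProj d n L g =
      (letI : Fintype L := Fintype.ofFinite L
       ((d : ℂ) ^ n)⁻¹ • ∑ b : L, psPoint d n ((b : PS d n) + a)) := by
  let : Fintype L := Fintype.ofFinite L
  rw [hL.sum_psPoint_add a, stabProj]
  simp only [ha]

/-- If `g = [a,·]|_L`, then `Π_L^g = d^{-n} Σ_{b ∈ L+a} A(b)`: the stabilizer state is
the normalized indicator function of the affine subspace `L + a` in the phase space
point operator basis. -/
theorem stabProj_eq_sum_psPoint (d n : ℕ) [Fact d.Prime] (hodd : Odd d)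
    (L : Submodule (ZMod d) (PS d n)) (hL : IsLagrangian d n L)
    (g : L →ₗ[ZMod d] ZMod d) (a : PS d n)
    (ha : ∀ b : L, g b = symp a (b : PS d n)) :
    stabProj d n L g =
      (letI : Fintype L := Fintype.ofFinite L
       ((d : ℂ) ^ n)⁻¹ • ∑ b : L, psPoint d n ((b : PS d n) + a)) :=
  stabProj_eq_sum_psPoint_general d n L hL g a ha
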